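/- arXiv:2503.18053 — 2 statements merged into one kernel-verified Lean document; each statement's English description precedes it below -/
import Mathlib

section
/- For any C⁴ function v on an open set Ω ⊆ ℝ² and with ε[v] := 𝔾⁻¹(cof(∇²v)) where 𝔾⁻¹σ = ((1-ν²)/E)σ - ((1+ν)ν/E)cof(σ), the identity curl Curl ε[v] = ((1-ν²)/E) Δ²v holds pointwise on Ω, where Δ² = ΔΔ is the bilaplacian. -/
/-!
Since `cof` is an involution, `ε[v] = a • cof ∇²v - b • ∇²v` with `a = (1 - ν²)/E`, and
`curl Curl` is linear. The rows of `∇²v` are the gradients of `∂₁v` and `∂₂v`, so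
`curl Curl ∇²v = 0`. By the symmetry of second derivatives `∇²v` is symmetric, hence
`cof ∇²v = (Δv) I - ∇²v`, and `curl Curl (φ I) = Δφ`; together `curl Curl cof ∇²v = Δ²v`.
-/

open Matrix

noncomputable def pd1 (f : ℝ × ℝ → ℝ) (p : ℝ × ℝ) : ℝ := fderiv ℝ f p (1, 0)
noncomputable def pd2 (f : ℝ × ℝ → ℝ) (p : ℝ × ℝ) : ℝ := fderiv ℝ f p (0, 1)

def cof (M : Matrix (Fin 2) (Fin 2) ℝ) : Matrix (Fin 2) (Fin 2) ℝ :=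
  !![M 1 1, -(M 1 0); -(M 0 1), M 0 0]

noncomputable def hess (v : ℝ × ℝ → ℝ) (p : ℝ × ℝ) : Matrix (Fin 2) (Fin 2) ℝ :=
  !![pd1 (pd1 v) p, pd2 (pd1 v) p; pd1 (pd2 v) p, pd2 (pd2 v) p]

/-- The inverse constitutive law `ℂ⁻¹σ = ((1-ν²)/E)σ - ((1+ν)ν/E)cof(σ)`. -/
noncomputable def invLaw (E ν : ℝ) (σ : Matrix (Fin 2) (Fin 2) ℝ) :
    Matrix (Fin 2) (Fin 2) ℝ :=
  ((1 - ν ^ 2) / E) • σ - ((1 + ν) * ν / E) • cof σ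

noncomputable def curlV (V : ℝ × ℝ → ℝ × ℝ) (p : ℝ × ℝ) : ℝ :=
  pd1 (fun q => (V q).2) p - pd2 (fun q => (V q).1) p

noncomputable def CurlM (M : ℝ × ℝ → Matrix (Fin 2) (Fin 2) ℝ) (p : ℝ × ℝ) : ℝ × ℝ :=
  (curlV (fun q => (M q 0 0, M q 0 1)) p, curlV (fun q => (M q 1 0, M q 1 1)) p)

/-- Laplacian. -/
noncomputable def lap (v : ℝ × ℝ → ℝ) (p : ℝ × ℝ) : ℝ := pd1 (pd1 v) p + pd2 (pd2 v) p

/-- Bilaplacian. -/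
noncomputable def bilap (v : ℝ × ℝ → ℝ) (p : ℝ × ℝ) : ℝ := lap (lap v) p

open Filter Topology

/-- Defined through `fderiv` rather than as `lineDeriv`, so that `pd1 = dirDeriv (1, 0)` holds by
`rfl`. -/
noncomputable def dirDeriv {E F : Type*} [NormedAddCommGroup E] [NormedSpace ℝ E]
    [NormedAddCommGroup F] [NormedSpace ℝ F] (w : E) (f : E → F) (p : E) : F :=
  fderiv ℝ f p w

section DirDeriv

variable {E F : Type*} [NormedAddCommGroup E] [NormedSpace ℝ E]
  [NormedAddCommGroup F] [NormedSpace ℝ F] {f g : E → F} {p u w : E}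

theorem ContDiffAt.dirDeriv {m n : WithTop ℕ∞} (hf : ContDiffAt ℝ n f p) (hmn : m + 1 ≤ n) :
    ContDiffAt ℝ m (dirDeriv w f) p :=
  (hf.fderiv_right hmn).clm_apply contDiffAt_const

theorem Filter.EventuallyEq.dirDeriv (h : f =ᶠ[𝓝 p] g) : dirDeriv w f =ᶠ[𝓝 p] dirDeriv w g :=
  (h.fderiv (𝕜 := ℝ)).mono fun _ hq => by simp only [_root_.dirDeriv, hq]

theorem dirDeriv_congr (h : f =ᶠ[𝓝 p] g) : dirDeriv w f p = dirDeriv w g p :=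
  h.dirDeriv.eq_of_nhds

theorem dirDeriv_const (c : F) : dirDeriv w (fun _ : E => c) = fun _ => 0 := by
  ext q
  simp [dirDeriv]

theorem dirDeriv_fun_const_smul (c : ℝ) : dirDeriv w (fun q => c • f q) = c • dirDeriv w f := by
  ext q
  change fderiv ℝ (c • f) q w = c • fderiv ℝ f q w
  rw [fderiv_const_smul_field]
  rfl

theorem dirDeriv_fun_sub (hf : DifferentiableAt ℝ f p) (hg : DifferentiableAt ℝ g p) :
    dirDeriv w (fun q => f q - g q) p = dirDeriv w f p - dirDeriv w g p := by
  simp [dirDeriv, fderiv_fun_sub hf hg]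

theorem dirDeriv_dirDeriv_fun_sub (hf : ContDiffAt ℝ 2 f p) (hg : ContDiffAt ℝ 2 g p) :
    dirDeriv u (dirDeriv w fun q => f q - g q) p =
      dirDeriv u (dirDeriv w f) p - dirDeriv u (dirDeriv w g) p := by
  have hsub : dirDeriv w (fun q => f q - g q) =ᶠ[𝓝 p] fun q => dirDeriv w f q - dirDeriv w g q := by
    filter_upwards [hf.eventually (by simp), hg.eventually (by simp)] with q hfq hgq
    exact dirDeriv_fun_sub (hfq.differentiableAt (by simp)) (hgq.differentiableAt (by simp))
  rw [dirDeriv_congr hsub]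
  exact dirDeriv_fun_sub ((hf.dirDeriv (m := 1) (by norm_num)).differentiableAt one_ne_zero)
    ((hg.dirDeriv (m := 1) (by norm_num)).differentiableAt one_ne_zero)

theorem dirDeriv_dirDeriv_comm (hf : ContDiffAt ℝ 2 f p) :
    dirDeriv u (dirDeriv w f) p = dirDeriv w (dirDeriv u f) p := by
  have hf' : DifferentiableAt ℝ (fderiv ℝ f) p :=
    (hf.fderiv_right (m := 1) (by norm_num)).differentiableAt one_ne_zero
  have hsnd : ∀ u w, dirDeriv u (dirDeriv w f) p = fderiv ℝ (fderiv ℝ f) p u w := fun u w => by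
    change fderiv ℝ (fun q => fderiv ℝ f q w) p u = _
    rw [fderiv_clm_apply hf' (differentiableAt_const w)]
    simp
  rw [hsnd, hsnd, hf.isSymmSndFDerivAt (by simp [minSmoothness_of_isRCLikeNormedField])]

end DirDeriv

theorem pd1_eq_dirDeriv : pd1 = dirDeriv (1, 0) := rfl

theorem pd2_eq_dirDeriv : pd2 = dirDeriv (0, 1) := rfl

theorem cof_cof (M : Matrix (Fin 2) (Fin 2) ℝ) : cof (cof M) = M := by
  ext i j
  fin_cases i <;> fin_cases j <;> simp [cof]

theorem cof_eq_trace_smul_one_sub_transpose (M : Matrix (Fin 2) (Fin 2) ℝ) :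
    cof M = M.trace • 1 - Mᵀ := by
  ext i j
  fin_cases i <;> fin_cases j <;> simp [cof, Matrix.trace_fin_two]

theorem invLaw_cof (E ν : ℝ) (σ : Matrix (Fin 2) (Fin 2) ℝ) :
    invLaw E ν (cof σ) = ((1 - ν ^ 2) / E) • cof σ - ((1 + ν) * ν / E) • σ := by
  rw [invLaw, cof_cof]

section Hessian

variable {v : ℝ × ℝ → ℝ} {p : ℝ × ℝ}

theorem trace_hess : (hess v p).trace = lap v p := by
  simp [hess, lap, Matrix.trace_fin_two]

theorem transpose_hess (hv : ContDiffAt ℝ 2 v p) : (hess v p)ᵀ = hess v p := by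
  have hcomm : pd1 (pd2 v) p = pd2 (pd1 v) p := dirDeriv_dirDeriv_comm hv
  ext i j
  fin_cases i <;> fin_cases j <;> simp [hess, hcomm]

theorem contDiffAt_hess_apply {m n : WithTop ℕ∞} (hv : ContDiffAt ℝ n v p) (hmn : m + 2 ≤ n)
    (i j : Fin 2) : ContDiffAt ℝ m (fun q => hess v q i j) p := by
  have hmn' : m + 1 + 1 ≤ n := by rwa [add_assoc, one_add_one_eq_two]
  have h1 {w : ℝ × ℝ} : ContDiffAt ℝ (m + 1) (dirDeriv w v) p := hv.dirDeriv hmn'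
  fin_cases i <;> fin_cases j <;> exact h1.dirDeriv le_rfl

end Hessian

theorem contDiffAt_cof_apply {n : WithTop ℕ∞} {M : ℝ × ℝ → Matrix (Fin 2) (Fin 2) ℝ} {p : ℝ × ℝ}
    (hM : ∀ i j, ContDiffAt ℝ n (fun q => M q i j) p) (i j : Fin 2) :
    ContDiffAt ℝ n (fun q => cof (M q) i j) p := by
  fin_cases i <;> fin_cases j <;> simp [cof, hM, ContDiffAt.neg]

theorem contDiffAt_smul_one_apply {ι : Type*} [DecidableEq ι] {n : WithTop ℕ∞} {φ : ℝ × ℝ → ℝ}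
    {p : ℝ × ℝ} (hφ : ContDiffAt ℝ n φ p) (i j : ι) :
    ContDiffAt ℝ n (fun q => (φ q • (1 : Matrix ι ι ℝ)) i j) p := by
  simpa using hφ.mul (contDiffAt_const (c := (1 : Matrix ι ι ℝ) i j))

section Curl

variable {p : ℝ × ℝ}

theorem curlV_congr {V W : ℝ × ℝ → ℝ × ℝ} (h : V =ᶠ[𝓝 p] W) : curlV V p = curlV W p := by
  simp only [curlV, pd1_eq_dirDeriv, pd2_eq_dirDeriv]
  rw [dirDeriv_congr (h.mono fun _ hq => congrArg Prod.snd hq),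
    dirDeriv_congr (h.mono fun _ hq => congrArg Prod.fst hq)]

theorem curlV_CurlM_congr {M N : ℝ × ℝ → Matrix (Fin 2) (Fin 2) ℝ} (h : M =ᶠ[𝓝 p] N) :
    curlV (CurlM M) p = curlV (CurlM N) p :=
  curlV_congr <| h.eventuallyEq_nhds.mono fun _ hq => Prod.ext
    (curlV_congr <| hq.mono fun _ hr => by simp only [hr])
    (curlV_congr <| hq.mono fun _ hr => by simp only [hr])

theorem curlV_grad_eq_zero {g : ℝ × ℝ → ℝ} (hg : ContDiffAt ℝ 2 g p) :
    curlV (fun q => (pd1 g q, pd2 g q)) p = 0 :=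
  sub_eq_zero.2 (dirDeriv_dirDeriv_comm hg)

/-- The rows of `hess v` are the gradients of `pd1 v` and `pd2 v`. -/
theorem curlV_CurlM_hess {v : ℝ × ℝ → ℝ} (hv : ContDiffAt ℝ 3 v p) :
    curlV (CurlM (hess v)) p = 0 := by
  have hzero : CurlM (hess v) =ᶠ[𝓝 p] fun _ => 0 := by
    filter_upwards [hv.eventually (by simp)] with q hq
    exact Prod.ext (curlV_grad_eq_zero (hq.dirDeriv (by norm_num)))
      (curlV_grad_eq_zero (hq.dirDeriv (by norm_num)))
  rw [curlV_congr hzero]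
  simp [curlV, pd1_eq_dirDeriv, pd2_eq_dirDeriv, dirDeriv_const]

theorem curlV_CurlM_eq {M : ℝ × ℝ → Matrix (Fin 2) (Fin 2) ℝ}
    (hM : ∀ i j, ContDiffAt ℝ 2 (fun q => M q i j) p) :
    curlV (CurlM M) p = pd1 (pd1 fun q => M q 1 1) p - pd1 (pd2 fun q => M q 1 0) p
      - pd2 (pd1 fun q => M q 0 1) p + pd2 (pd2 fun q => M q 0 0) p := by
  have hd {w : ℝ × ℝ} (i j : Fin 2) : DifferentiableAt ℝ (dirDeriv w fun q => M q i j) p :=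
    ((hM i j).dirDeriv (m := 1) (by norm_num)).differentiableAt one_ne_zero
  simp only [curlV, CurlM, pd1_eq_dirDeriv, pd2_eq_dirDeriv]
  rw [dirDeriv_fun_sub (hd 1 1) (hd 1 0), dirDeriv_fun_sub (hd 0 1) (hd 0 0)]
  ring

theorem curlV_CurlM_sub {A B : ℝ × ℝ → Matrix (Fin 2) (Fin 2) ℝ}
    (hA : ∀ i j, ContDiffAt ℝ 2 (fun q => A q i j) p)
    (hB : ∀ i j, ContDiffAt ℝ 2 (fun q => B q i j) p) :
    curlV (CurlM fun q => A q - B q) p = curlV (CurlM A) p - curlV (CurlM B) p := by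
  rw [curlV_CurlM_eq (M := fun q => A q - B q) fun i j => (hA i j).sub (hB i j),
    curlV_CurlM_eq hA, curlV_CurlM_eq hB]
  simp only [Matrix.sub_apply, pd1_eq_dirDeriv, pd2_eq_dirDeriv]
  rw [dirDeriv_dirDeriv_fun_sub (hA 1 1) (hB 1 1), dirDeriv_dirDeriv_fun_sub (hA 1 0) (hB 1 0),
    dirDeriv_dirDeriv_fun_sub (hA 0 1) (hB 0 1), dirDeriv_dirDeriv_fun_sub (hA 0 0) (hB 0 0)]
  ring

theorem curlV_CurlM_smul (c : ℝ) (A : ℝ × ℝ → Matrix (Fin 2) (Fin 2) ℝ) :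
    curlV (CurlM fun q => c • A q) p = c * curlV (CurlM A) p := by
  simp only [curlV, CurlM, Matrix.smul_apply]
  simp only [pd1_eq_dirDeriv, pd2_eq_dirDeriv, dirDeriv_fun_const_smul, Pi.smul_apply, ← smul_sub]
  rw [smul_eq_mul]

theorem curlV_CurlM_smul_one {φ : ℝ × ℝ → ℝ} (hφ : ContDiffAt ℝ 2 φ p) :
    curlV (CurlM fun q => φ q • (1 : Matrix (Fin 2) (Fin 2) ℝ)) p = lap φ p := by
  rw [curlV_CurlM_eq (contDiffAt_smul_one_apply hφ)]
  simp [lap, pd1_eq_dirDeriv, pd2_eq_dirDeriv, dirDeriv_const]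

theorem curlV_CurlM_cof_hess {v : ℝ × ℝ → ℝ} (hv : ContDiffAt ℝ 4 v p) :
    curlV (CurlM fun q => cof (hess v q)) p = bilap v p := by
  have hcof : (fun q => cof (hess v q)) =ᶠ[𝓝 p] fun q => lap v q • 1 - hess v q := by
    filter_upwards [hv.eventually (by simp)] with q hq
    rw [cof_eq_trace_smul_one_sub_transpose, transpose_hess (hq.of_le (by norm_num)), trace_hess]
  have hH := contDiffAt_hess_apply hv (m := 2) (by norm_num)
  have hlap : ContDiffAt ℝ 2 (lap v) p := (hH 0 0).add (hH 1 1)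
  rw [curlV_CurlM_congr hcof, curlV_CurlM_sub (contDiffAt_smul_one_apply hlap) hH,
    curlV_CurlM_smul_one hlap, curlV_CurlM_hess (hv.of_le (by norm_num)), sub_zero, bilap]

end Curl

theorem curlCurl_airy_strain_general (E ν : ℝ)
    (Ω : Set (ℝ × ℝ)) (hΩ : IsOpen Ω) (v : ℝ × ℝ → ℝ) (hv : ContDiffOn ℝ 4 v Ω) :
    ∀ p ∈ Ω,
      curlV (CurlM (fun q => invLaw E ν (cof (hess v q)))) p
        = ((1 - ν ^ 2) / E) * bilap v p := by
  intro p hp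
  have hv4 : ContDiffAt ℝ 4 v p := hv.contDiffAt (hΩ.mem_nhds hp)
  have hH := contDiffAt_hess_apply hv4 (m := 2) (by norm_num)
  simp only [invLaw_cof]
  rw [curlV_CurlM_sub (A := fun q => _ • cof (hess v q)) (B := fun q => _ • hess v q)
      (fun i j => (contDiffAt_cof_apply hH i j).const_smul ((1 - ν ^ 2) / E))
      (fun i j => (hH i j).const_smul ((1 + ν) * ν / E)),
    curlV_CurlM_smul, curlV_CurlM_smul, curlV_CurlM_cof_hess hv4,
    curlV_CurlM_hess (hv4.of_le (by norm_num))]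
  ring

/-- For a C⁴ function `v` on an open set `Ω ⊆ ℝ²` and `ε[v] = ℂ⁻¹(cof(∇²v))`, one has
`curl Curl ε[v] = ((1-ν²)/E) Δ²v` pointwise on `Ω`. -/
theorem curlCurl_airy_strain (E ν : ℝ) (hE : 0 < E) (hν₁ : -1 < ν) (hν₂ : ν < 1 / 2)
    (Ω : Set (ℝ × ℝ)) (hΩ : IsOpen Ω) (v : ℝ × ℝ → ℝ) (hv : ContDiffOn ℝ 4 v Ω) :
    ∀ p ∈ Ω,
      curlV (CurlM (fun q => invLaw E ν (cof (hess v q)))) p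
        = ((1 - ν ^ 2) / E) * bilap v p :=
  curlCurl_airy_strain_general E ν Ω hΩ v hv
end

section
/- For each fixed unit vector e ∈ ℝ² and the vector field v_D(x) := (E/(1-ν²)) (x/(8π)) (log|x|² + 1) (x ≠ 0, v_D(0) = 0), the scalar function e × v_D := e₁ (v_D)₂ - e₂ (v_D)₁ is biharmonic on ℝ² \ {0}: Δ²(e × v_D) = 0 pointwise away from the origin. -/
/-- The dislocation Airy potential `v_D(x) = (E/(1-ν²)) (x/(8π)) (log|x|² + 1)`, with
`v_D(0) = 0`. -/
noncomputable def vD (E ν : ℝ) (x : ℝ × ℝ) : ℝ × ℝ :=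
  if x = 0 then 0
  else ((E / (1 - ν ^ 2)) / (8 * Real.pi) * (Real.log (x.1 ^ 2 + x.2 ^ 2) + 1)) • x

/-
Up to the constant factor, `e × v_D` is `(log |x|² + 1) ⟨a, x⟩` with `a = (-e₂, e₁)`. Its Laplacian
is the dipole `4 ⟨a, x⟩ / |x|²`, which is harmonic on `ℝ² \ {0}` (it is a directional derivative of
the harmonic function `log |x|²`), so the bilaplacian vanishes there.
-/

open Filter Topology ContinuousLinearMap

namespace Plane

lemma pd1_eq_of_hasFDerivAt {f : ℝ × ℝ → ℝ} {u v : ℝ} {p : ℝ × ℝ}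
    (h : HasFDerivAt f (u • fst ℝ ℝ ℝ + v • snd ℝ ℝ ℝ) p) : pd1 f p = u := by
  simp [pd1, h.fderiv]

lemma pd2_eq_of_hasFDerivAt {f : ℝ × ℝ → ℝ} {u v : ℝ} {p : ℝ × ℝ}
    (h : HasFDerivAt f (u • fst ℝ ℝ ℝ + v • snd ℝ ℝ ℝ) p) : pd2 f p = v := by
  simp [pd2, h.fderiv]

lemma lap_eq_of_hasFDerivAt {f g₁ g₂ : ℝ × ℝ → ℝ} {p : ℝ × ℝ} {D₁ D₂ : ℝ × ℝ →L[ℝ] ℝ}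
    (hf : ∀ᶠ q in 𝓝 p, HasFDerivAt f (g₁ q • fst ℝ ℝ ℝ + g₂ q • snd ℝ ℝ ℝ) q)
    (h₁ : HasFDerivAt g₁ D₁ p) (h₂ : HasFDerivAt g₂ D₂ p) :
    lap f p = D₁ (1, 0) + D₂ (0, 1) := by
  have e₁ : pd1 f =ᶠ[𝓝 p] g₁ := hf.mono fun q hq => pd1_eq_of_hasFDerivAt hq
  have e₂ : pd2 f =ᶠ[𝓝 p] g₂ := hf.mono fun q hq => pd2_eq_of_hasFDerivAt hq
  rw [lap, pd1, pd2, e₁.fderiv_eq, e₂.fderiv_eq, h₁.fderiv, h₂.fderiv]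

lemma lap_congr {f g : ℝ × ℝ → ℝ} {p : ℝ × ℝ} (h : f =ᶠ[𝓝 p] g) : lap f p = lap g p := by
  have e₁ : pd1 f =ᶠ[𝓝 p] pd1 g := h.eventuallyEq_nhds.mono fun q hq => by
    rw [pd1, pd1, hq.fderiv_eq]
  have e₂ : pd2 f =ᶠ[𝓝 p] pd2 g := h.eventuallyEq_nhds.mono fun q hq => by
    rw [pd2, pd2, hq.fderiv_eq]
  rw [lap, lap, pd1, pd1, e₁.fderiv_eq, pd2, pd2, e₂.fderiv_eq]

lemma eq_smul_fst_add_smul_snd {L : ℝ × ℝ →L[ℝ] ℝ} {u v : ℝ} (h₁ : L (1, 0) = u)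
    (h₂ : L (0, 1) = v) : L = u • fst ℝ ℝ ℝ + v • snd ℝ ℝ ℝ := by
  ext <;> simp [h₁, h₂]

noncomputable def normSq (p : ℝ × ℝ) : ℝ := p.1 ^ 2 + p.2 ^ 2

lemma normSq_pos {p : ℝ × ℝ} (hp : p ≠ 0) : 0 < normSq p := by
  have : p.1 ≠ 0 ∨ p.2 ≠ 0 := by
    contrapose! hp
    exact Prod.ext hp.1 hp.2
  unfold normSq
  rcases this with h | h <;> positivity

lemma hasFDerivAt_normSq (p : ℝ × ℝ) :
    HasFDerivAt normSq ((2 * p.1) • fst ℝ ℝ ℝ + (2 * p.2) • snd ℝ ℝ ℝ) p := by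
  refine ((hasFDerivAt_fst (p := p)).pow 2).add ((hasFDerivAt_snd (p := p)).pow 2)
    |>.congr_fderiv (eq_smul_fst_add_smul_snd ?_ ?_) <;>
    simp only [add_apply, smul_apply, coe_fst', coe_snd', smul_eq_mul, nsmul_eq_mul] <;> ring

lemma hasFDerivAt_log_normSq {p : ℝ × ℝ} (hp : p ≠ 0) :
    HasFDerivAt (fun q => Real.log (normSq q))
      ((2 * p.1 / normSq p) • fst ℝ ℝ ℝ + (2 * p.2 / normSq p) • snd ℝ ℝ ℝ) p := by
  refine (hasFDerivAt_normSq p).log (normSq_pos hp).ne'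
    |>.congr_fderiv (eq_smul_fst_add_smul_snd ?_ ?_) <;>
    simp only [add_apply, smul_apply, coe_fst', coe_snd', smul_eq_mul] <;> ring

lemma hasFDerivAt_inv_normSq {p : ℝ × ℝ} (hp : p ≠ 0) :
    HasFDerivAt (fun q => (normSq q)⁻¹)
      ((-2 * p.1 / normSq p ^ 2) • fst ℝ ℝ ℝ + (-2 * p.2 / normSq p ^ 2) • snd ℝ ℝ ℝ) p := by
  refine (hasDerivAt_inv (normSq_pos hp).ne').comp_hasFDerivAt p (hasFDerivAt_normSq p)
    |>.congr_fderiv (eq_smul_fst_add_smul_snd ?_ ?_) <;>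
    simp only [add_apply, smul_apply, coe_fst', coe_snd', smul_eq_mul] <;> ring

lemma hasFDerivAt_linear (a b : ℝ) (p : ℝ × ℝ) :
    HasFDerivAt (fun q : ℝ × ℝ => a * q.1 + b * q.2) (a • fst ℝ ℝ ℝ + b • snd ℝ ℝ ℝ) p :=
  ((hasFDerivAt_fst (p := p)).const_mul a).add ((hasFDerivAt_snd (p := p)).const_mul b)

noncomputable def dipole (a b : ℝ) (p : ℝ × ℝ) : ℝ := (a * p.1 + b * p.2) * (normSq p)⁻¹

noncomputable def logTimesLinear (a b : ℝ) (p : ℝ × ℝ) : ℝ :=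
  (Real.log (normSq p) + 1) * (a * p.1 + b * p.2)

variable (a b : ℝ) {p : ℝ × ℝ}

lemma hasFDerivAt_dipole (hp : p ≠ 0) :
    HasFDerivAt (dipole a b)
      (((a - 2 * p.1 * dipole a b p) * (normSq p)⁻¹) • fst ℝ ℝ ℝ
        + ((b - 2 * p.2 * dipole a b p) * (normSq p)⁻¹) • snd ℝ ℝ ℝ) p := by
  refine (hasFDerivAt_linear a b p).mul (hasFDerivAt_inv_normSq hp)
    |>.congr_fderiv (eq_smul_fst_add_smul_snd ?_ ?_) <;>
    simp only [add_apply, smul_apply, coe_fst', coe_snd', smul_eq_mul, dipole] <;> ring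

lemma hasFDerivAt_logTimesLinear (hp : p ≠ 0) :
    HasFDerivAt (logTimesLinear a b)
      ((2 * p.1 * dipole a b p + (Real.log (normSq p) + 1) * a) • fst ℝ ℝ ℝ
        + (2 * p.2 * dipole a b p + (Real.log (normSq p) + 1) * b) • snd ℝ ℝ ℝ) p := by
  refine ((hasFDerivAt_log_normSq hp).add_const 1).mul (hasFDerivAt_linear a b p)
    |>.congr_fderiv (eq_smul_fst_add_smul_snd ?_ ?_) <;>
    simp only [add_apply, smul_apply, coe_fst', coe_snd', smul_eq_mul, dipole] <;> ring

lemma lap_dipole (hp : p ≠ 0) : lap (dipole a b) p = 0 := by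
  have hd := hasFDerivAt_dipole a b hp
  have hg₁ : HasFDerivAt (fun q => (a - 2 * q.1 * dipole a b q) * (normSq q)⁻¹) _ p :=
    ((hasFDerivAt_const a p).sub (((hasFDerivAt_fst (p := p)).const_mul 2).mul hd)).mul
      (hasFDerivAt_inv_normSq hp)
  have hg₂ : HasFDerivAt (fun q => (b - 2 * q.2 * dipole a b q) * (normSq q)⁻¹) _ p :=
    ((hasFDerivAt_const b p).sub (((hasFDerivAt_snd (p := p)).const_mul 2).mul hd)).mul
      (hasFDerivAt_inv_normSq hp)
  rw [lap_eq_of_hasFDerivAt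
    ((eventually_ne_nhds hp).mono fun q hq => hasFDerivAt_dipole a b hq) hg₁ hg₂]
  have hr : p.1 ^ 2 + p.2 ^ 2 ≠ 0 := (normSq_pos hp).ne'
  simp only [Pi.sub_apply, Pi.mul_apply, dipole, normSq, smul_add, add_apply, neg_apply,
    smul_apply, coe_fst', coe_snd', smul_eq_mul, mul_one, mul_zero, add_zero, zero_add, zero_sub]
  field_simp
  ring

lemma lap_logTimesLinear (hp : p ≠ 0) :
    lap (logTimesLinear a b) p = dipole (4 * a) (4 * b) p := by
  have hd := hasFDerivAt_dipole a b hp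
  have hl := (hasFDerivAt_log_normSq hp).add_const 1
  have hg₁ : HasFDerivAt
      (fun q => 2 * q.1 * dipole a b q + (Real.log (normSq q) + 1) * a) _ p :=
    (((hasFDerivAt_fst (p := p)).const_mul 2).mul hd).add (hl.mul_const a)
  have hg₂ : HasFDerivAt
      (fun q => 2 * q.2 * dipole a b q + (Real.log (normSq q) + 1) * b) _ p :=
    (((hasFDerivAt_snd (p := p)).const_mul 2).mul hd).add (hl.mul_const b)
  rw [lap_eq_of_hasFDerivAt
    ((eventually_ne_nhds hp).mono fun q hq => hasFDerivAt_logTimesLinear a b hq) hg₁ hg₂]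
  have hr : p.1 ^ 2 + p.2 ^ 2 ≠ 0 := (normSq_pos hp).ne'
  simp only [dipole, normSq, smul_add, add_apply, smul_apply, coe_fst', coe_snd',
    smul_eq_mul, mul_one, mul_zero, add_zero, zero_add]
  field_simp
  ring

lemma bilap_logTimesLinear (hp : p ≠ 0) : bilap (logTimesLinear a b) p = 0 := by
  rw [bilap, lap_congr ((eventually_ne_nhds hp).mono fun q hq => lap_logTimesLinear a b hq),
    lap_dipole _ _ hp]

end Plane

theorem cross_vD_biharmonic_away_from_origin_general (E ν : ℝ) (e : ℝ × ℝ) :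
    ∀ x : ℝ × ℝ, x ≠ 0 →
      bilap (fun y => e.1 * (vD E ν y).2 - e.2 * (vD E ν y).1) x = 0 := by
  intro x hx
  set C := (E / (1 - ν ^ 2)) / (8 * Real.pi)
  have hcross : (fun y => e.1 * (vD E ν y).2 - e.2 * (vD E ν y).1)
      = Plane.logTimesLinear (-C * e.2) (C * e.1) := by
    funext y
    by_cases hy : y = 0
    · simp [hy, vD, Plane.logTimesLinear]
    · simp only [vD, hy, if_false, Prod.smul_fst, Prod.smul_snd, smul_eq_mul,
        Plane.logTimesLinear, Plane.normSq]
      ring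
  rw [hcross]
  exact Plane.bilap_logTimesLinear _ _ hx

/-- For a unit vector `e ∈ ℝ²`, the scalar function `e × v_D = e₁(v_D)₂ - e₂(v_D)₁`
is biharmonic on `ℝ² \ {0}`. -/
theorem cross_vD_biharmonic_away_from_origin (E ν : ℝ) (hE : 0 < E)
    (hν₁ : -1 < ν) (hν₂ : ν < 1 / 2) (e : ℝ × ℝ) (he : e.1 ^ 2 + e.2 ^ 2 = 1) :
    ∀ x : ℝ × ℝ, x ≠ 0 →
      bilap (fun y => e.1 * (vD E ν y).2 - e.2 * (vD E ν y).1) x = 0 :=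
  cross_vD_biharmonic_away_from_origin_general E ν e
end
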